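/- Let f: ℂ^{NK}\{0} → ℝ, f(v) = Π_{k=1}^{K} (vᴴ A_k v)/(vᴴ B_k v) · Π_{n=1}^{N} (vᴴ E_n v)^{−c_n}, with A_k, B_k, E_n Hermitian positive definite and c_n ≥ 0 real. Then the (Wirtinger) gradient of log f at v satisfies ∂(log f)/∂v̄ᴴ = (1/ln 2 omitted) Σ_k [A_k v/(vᴴA_k v) − B_k v/(vᴴB_k v)] − Σ_n c_n E_n v/(vᴴ E_n v), and this gradient vanishes at v if and only if A_KKT(v) v = λ_v(v) B_KKT(v) v, where A_KKT(v) = Σ_k A_k/(vᴴA_kv) · Π_ℓ(vᴴA_ℓv), B_KKT(v) = [Σ_k B_k/(vᴴB_kv) + Σ_n c_n E_n/(vᴴE_nv)] · Π_ℓ(vᴴB_ℓv) · Π_m(vᴴE_mv)^{c_m}, and λ_v(v) = f(v). -/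

import Mathlib

/-!
Positive definiteness makes every quadratic form `aX = Re (vᴴ X v)` positive, so the stationarity
equation `∑ₖ A_k v / aA_k - ∑ₖ B_k v / aB_k - ∑ₙ cₙ E_n v / aE_n = 0` may be multiplied by
`∏ₖ aA_k ≠ 0`. Since `λ · (∏ₖ aB_k · ∏ₙ aE_n ^ cₙ) = ∏ₖ aA_k`, the result is exactly
`A_KKT v = λ B_KKT v`.
-/

open Matrix Finset ComplexOrder

lemma Matrix.PosDef.re_dotProduct_mulVec_pos {m : Type*} [Fintype m] {A : Matrix m m ℂ}
    (hA : A.PosDef) {v : m → ℂ} (hv : v ≠ 0) : 0 < (star v ⬝ᵥ (A *ᵥ v)).re :=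
  (Complex.pos_iff.mp (hA.dotProduct_mulVec_pos hv)).1

lemma Finset.prod_rpow_neg_mul_prod_rpow {ι : Type*} (s : Finset ι) {x : ι → ℝ}
    (hx : ∀ i ∈ s, 0 < x i) (y : ι → ℝ) :
    (∏ i ∈ s, x i ^ (-y i)) * ∏ i ∈ s, x i ^ y i = 1 := by
  rw [← prod_mul_distrib]
  exact prod_eq_one fun i hi => by rw [← Real.rpow_add (hx i hi), neg_add_cancel, Real.rpow_zero]

lemma sub_sub_eq_zero_iff_smul_eq_smul_smul_add {𝕜 V : Type*} [Field 𝕜] [AddCommGroup V]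
    [Module 𝕜 V] {x y z : V} {t l s : 𝕜} (ht : t ≠ 0) (hls : l * s = t) :
    x - y - z = 0 ↔ t • x = l • s • (y + z) := by
  rw [smul_smul, hls, sub_sub, sub_eq_zero, smul_right_inj ht]

theorem stmt14_general {M K N : ℕ}
    (A B : Fin K → Matrix (Fin M) (Fin M) ℂ) (E : Fin N → Matrix (Fin M) (Fin M) ℂ)
    (hA : ∀ k, (A k).PosDef) (hB : ∀ k, (B k).PosDef) (hE : ∀ n, (E n).PosDef)
    (c : Fin N → ℝ)
    (v : Fin M → ℂ) (hv : v ≠ 0) :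
    letI aA : Fin K → ℝ := fun k => (star v ⬝ᵥ ((A k) *ᵥ v)).re
    letI aB : Fin K → ℝ := fun k => (star v ⬝ᵥ ((B k) *ᵥ v)).re
    letI aE : Fin N → ℝ := fun n => (star v ⬝ᵥ ((E n) *ᵥ v)).re
    letI lam : ℝ := (∏ k, aA k / aB k) * ∏ n, (aE n) ^ (-(c n))
    letI AKKT : Matrix (Fin M) (Fin M) ℂ := (∏ ℓ, aA ℓ) • ∑ k, (aA k)⁻¹ • A k
    letI BKKT : Matrix (Fin M) (Fin M) ℂ :=
      ((∏ ℓ, aB ℓ) * ∏ m, (aE m) ^ (c m)) •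
        (∑ k, (aB k)⁻¹ • B k + ∑ n, (c n * (aE n)⁻¹) • E n)
    ((∑ k, ((aA k)⁻¹ • ((A k) *ᵥ v) - (aB k)⁻¹ • ((B k) *ᵥ v)))
        - ∑ n, (c n * (aE n)⁻¹) • ((E n) *ᵥ v) = 0)
      ↔ AKKT *ᵥ v = lam • (BKKT *ᵥ v) := by

  set aA : Fin K → ℝ := fun k => (star v ⬝ᵥ ((A k) *ᵥ v)).re
  set aB : Fin K → ℝ := fun k => (star v ⬝ᵥ ((B k) *ᵥ v)).re
  set aE : Fin N → ℝ := fun n => (star v ⬝ᵥ ((E n) *ᵥ v)).re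
  set lam : ℝ := (∏ k, aA k / aB k) * ∏ n, aE n ^ (-c n)
  have haA : ∀ k, 0 < aA k := fun k => (hA k).re_dotProduct_mulVec_pos hv
  have haB : ∀ k, 0 < aB k := fun k => (hB k).re_dotProduct_mulVec_pos hv
  have haE : ∀ n, 0 < aE n := fun n => (hE n).re_dotProduct_mulVec_pos hv
  have hAB : (∏ k, aA k / aB k) * ∏ k, aB k = ∏ k, aA k := by
    rw [prod_div_distrib, div_mul_cancel₀ _ (prod_pos fun k _ => haB k).ne']
  have hlam : lam * ((∏ k, aB k) * ∏ n, aE n ^ c n) = ∏ k, aA k := by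
    rw [mul_mul_mul_comm, hAB, prod_rpow_neg_mul_prod_rpow _ (fun n _ => haE n), mul_one]
  simp only [smul_mulVec, add_mulVec, sum_mulVec, sum_sub_distrib]
  exact sub_sub_eq_zero_iff_smul_eq_smul_smul_add (prod_pos fun k _ => haA k).ne' hlam

theorem stmt14 {M K N : ℕ}
    (A B : Fin K → Matrix (Fin M) (Fin M) ℂ) (E : Fin N → Matrix (Fin M) (Fin M) ℂ)
    (hA : ∀ k, (A k).PosDef) (hB : ∀ k, (B k).PosDef) (hE : ∀ n, (E n).PosDef)
    (c : Fin N → ℝ) (hc : ∀ n, 0 ≤ c n)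
    (v : Fin M → ℂ) (hv : v ≠ 0) :
    letI aA : Fin K → ℝ := fun k => (star v ⬝ᵥ ((A k) *ᵥ v)).re
    letI aB : Fin K → ℝ := fun k => (star v ⬝ᵥ ((B k) *ᵥ v)).re
    letI aE : Fin N → ℝ := fun n => (star v ⬝ᵥ ((E n) *ᵥ v)).re
    letI lam : ℝ := (∏ k, aA k / aB k) * ∏ n, (aE n) ^ (-(c n))
    letI AKKT : Matrix (Fin M) (Fin M) ℂ := (∏ ℓ, aA ℓ) • ∑ k, (aA k)⁻¹ • A k
    letI BKKT : Matrix (Fin M) (Fin M) ℂ :=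
      ((∏ ℓ, aB ℓ) * ∏ m, (aE m) ^ (c m)) •
        (∑ k, (aB k)⁻¹ • B k + ∑ n, (c n * (aE n)⁻¹) • E n)
    ((∑ k, ((aA k)⁻¹ • ((A k) *ᵥ v) - (aB k)⁻¹ • ((B k) *ᵥ v)))
        - ∑ n, (c n * (aE n)⁻¹) • ((E n) *ᵥ v) = 0)
      ↔ AKKT *ᵥ v = lam • (BKKT *ᵥ v) :=
  stmt14_general A B E hA hB hE c v hv
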